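/- arXiv:0812.1080 — 2 statements merged into one kernel-verified Lean document; each statement's English description precedes it below -/
import Mathlib

section
/- For a compact convex polytope P = {x : f_i(x) ≥ 0, i = 1,…,m} with nonempty interior and Hilbert metric d, for all x, y ∈ int P one has d(x,y) ≥ (1/2) max_{1 ≤ i ≤ m} |log(f_i(x)/f_i(y))|. -/
/-!
Restricted to the chord through `x` and `y`, the affine function `fᵢ` becomes an affine function
`g` of the chord parameter `t` (with `x` at `t = 0`, `y` at `t = 1`), nonnegative at the parameters
`t₁ < 0 < 1 < t₂` of the boundary points. Nonnegativity of `g(t₁)` says exactly that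
`fᵢ(y)/fᵢ(x)` is at most the first factor `(1 - t₁)/(-t₁)` of the cross-ratio, and nonnegativity
of `g(t₂)` that `fᵢ(x)/fᵢ(y)` is at most the second factor `t₂/(t₂ - 1)`. Both factors are at
least `1`, so `|log (fᵢ(x)/fᵢ(y))|` is bounded by the logarithm of their product, which is `2 d(x,y)`.
-/

open RealInnerProductSpace Set Bornology Metric AffineMap Real

theorem IsPreconnected.inter_frontier_nonempty {X : Type*} [TopologicalSpace X] {s t : Set X}
    (hs : IsPreconnected s) (hst : (s ∩ t).Nonempty) (hsdt : (s \ t).Nonempty) :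
    (s ∩ frontier t).Nonempty := by
  by_contra hempty
  have hcover : s ⊆ interior t ∪ interior tᶜ := by
    rw [← compl_frontier_eq_union_interior]
    exact fun p hp hpf => hempty ⟨p, hp, hpf⟩
  obtain ⟨p, hps, hpt⟩ := hst
  have hpint : p ∈ interior t :=
    (hcover hps).resolve_right fun h => interior_subset h hpt
  have hsint : s ⊆ interior t := hs.subset_left_of_subset_union isOpen_interior isOpen_interior
    (disjoint_compl_right.mono interior_subset interior_subset) hcover ⟨p, hps, hpint⟩
  obtain ⟨q, hqs, hqt⟩ := hsdt
  exact hqt (interior_subset (hsint hqs))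

section Chord

variable {E : Type*} [NormedAddCommGroup E] [NormedSpace ℝ E]

theorem exists_pos_add_smul_mem_frontier {s : Set E} (hs : IsBounded s) {x v : E}
    (hx : x ∈ interior s) (hv : v ≠ 0) : ∃ t : ℝ, 0 < t ∧ x + t • v ∈ frontier s := by
  obtain ⟨R, hR⟩ := (isBounded_iff_subset_closedBall x).1 hs
  set T := (|R| + 1) / ‖v‖
  have hT : 0 ≤ T := by positivity
  have hray : IsPreconnected ((fun t : ℝ => x + t • v) '' Icc 0 T) :=
    isPreconnected_Icc.image _ (by fun_prop)
  have hin : x ∈ (fun t : ℝ => x + t • v) '' Icc 0 T ∩ s :=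
    ⟨⟨0, ⟨le_rfl, hT⟩, by simp⟩, interior_subset hx⟩
  have hout : x + T • v ∈ (fun t : ℝ => x + t • v) '' Icc 0 T \ s := by
    refine ⟨⟨T, ⟨hT, le_rfl⟩, rfl⟩, fun hTs => ?_⟩
    have hdist := mem_closedBall.1 (hR hTs)
    rw [dist_eq_norm, add_sub_cancel_left, norm_smul, norm_of_nonneg hT,
      div_mul_cancel₀ _ (norm_ne_zero_iff.2 hv)] at hdist
    linarith [le_abs_self R]
  obtain ⟨_, ⟨t, ht, rfl⟩, hfr⟩ := hray.inter_frontier_nonempty ⟨x, hin⟩ ⟨_, hout⟩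
  refine ⟨t, ht.1.lt_of_ne fun h0 => ?_, hfr⟩
  subst h0
  simp only [zero_smul, add_zero, ← closure_sdiff_interior] at hfr
  exact hfr.2 hx

theorem exists_lineMap_mem_frontier {s : Set E} (hs : IsBounded s) {x y : E}
    (hx : x ∈ interior s) (hy : y ∈ interior s) (hxy : x ≠ y) :
    ∃ t₁ t₂ : ℝ, t₁ < 0 ∧ 1 < t₂ ∧
      lineMap x y t₁ ∈ frontier s ∧ lineMap x y t₂ ∈ frontier s := by
  have hv : y - x ≠ 0 := sub_ne_zero.2 hxy.symm
  obtain ⟨r₁, hr₁, h₁⟩ := exists_pos_add_smul_mem_frontier hs hx (neg_ne_zero.2 hv)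
  obtain ⟨r₂, hr₂, h₂⟩ := exists_pos_add_smul_mem_frontier hs hy hv
  refine ⟨-r₁, 1 + r₂, by linarith, by linarith, ?_, ?_⟩
  · convert h₁ using 1
    rw [lineMap_apply_module']
    module
  · convert h₂ using 1
    rw [lineMap_apply_module']
    module

theorem cross_ratio_lineMap {x y : E} (hxy : x ≠ y) {t₁ t₂ : ℝ} (ht₁ : t₁ < 0) (ht₂ : 1 < t₂) :
    ‖y - lineMap x y t₁‖ / ‖x - lineMap x y t₁‖ * (‖x - lineMap x y t₂‖ / ‖y - lineMap x y t₂‖)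
      = (1 - t₁) / -t₁ * (t₂ / (t₂ - 1)) := by
  have hD : dist x y ≠ 0 := dist_ne_zero.2 hxy
  have hleft (t : ℝ) : ‖x - lineMap x y t‖ = |t| * dist x y := by
    rw [← dist_eq_norm, dist_comm, dist_lineMap_left, norm_eq_abs]
  have hright (t : ℝ) : ‖y - lineMap x y t‖ = |1 - t| * dist x y := by
    rw [← dist_eq_norm, dist_comm, dist_lineMap_right, norm_eq_abs]
  rw [hleft, hleft, hright, hright, abs_of_neg ht₁, abs_of_pos (by linarith : 0 < 1 - t₁),
    abs_of_pos (by linarith : 0 < t₂), abs_of_neg (by linarith : 1 - t₂ < 0),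
    mul_div_mul_right _ _ hD, mul_div_mul_right _ _ hD, neg_sub]

end Chord

theorem abs_log_div_le_log_cross_ratio {a b t₁ t₂ : ℝ} (ha : 0 ≤ a) (hb : 0 ≤ b)
    (ht₁ : t₁ < 0) (ht₂ : 1 < t₂) (h₁ : 0 ≤ lineMap a b t₁) (h₂ : 0 ≤ lineMap a b t₂) :
    |log (a / b)| ≤ log ((1 - t₁) / -t₁ * (t₂ / (t₂ - 1))) := by
  have hr₁ : 1 ≤ (1 - t₁) / -t₁ := by rw [le_div_iff₀ (by linarith)]; linarith
  have hr₂ : 1 ≤ t₂ / (t₂ - 1) := by rw [le_div_iff₀ (by linarith)]; linarith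
  rw [log_mul (by positivity) (by positivity)]
  have hlog₁ := log_nonneg hr₁
  have hlog₂ := log_nonneg hr₂
  -- if `a = 0` or `b = 0`, then `a / b = 0` and the left side is `|log 0| = 0`
  rcases ha.eq_or_lt with rfl | ha
  · simpa using add_nonneg hlog₁ hlog₂
  rcases hb.eq_or_lt with rfl | hb
  · simpa using add_nonneg hlog₁ hlog₂
  rw [lineMap_apply_ring'] at h₁ h₂
  have hba : b / a ≤ (1 - t₁) / -t₁ := by
    rw [div_le_div_iff₀ ha (by linarith)]; linarith
  have hab : a / b ≤ t₂ / (t₂ - 1) := by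
    rw [div_le_div_iff₀ hb (by linarith)]; linarith
  have hlog_ba := log_le_log (div_pos hb ha) hba
  have hlog_ab := log_le_log (div_pos ha hb) hab
  rw [← inv_div, log_inv] at hlog_ba
  rw [abs_le]
  constructor <;> linarith

theorem hilbert_dist_ge_log_ratio_general {n m : ℕ}
    (f : Fin m → (EuclideanSpace ℝ (Fin n) →ᵃ[ℝ] ℝ))
    (P : Set (EuclideanSpace ℝ (Fin n)))
    (hP : P = {x | ∀ i, 0 ≤ f i x})
    (hPcomp : IsCompact P)
    (d : EuclideanSpace ℝ (Fin n) → EuclideanSpace ℝ (Fin n) → ℝ)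
    (hd0 : ∀ x, d x x = 0)
    (hd : ∀ x y, x ∈ interior P → y ∈ interior P → x ≠ y →
      ∀ a1 a2 : EuclideanSpace ℝ (Fin n), a1 ∈ frontier P → a2 ∈ frontier P →
      (∃ t1 t2 : ℝ, t1 < 0 ∧ 1 < t2 ∧ a1 = x + t1 • (y - x) ∧ a2 = x + t2 • (y - x)) →
      d x y = (1/2) * Real.log ((‖y - a1‖ / ‖x - a1‖) * (‖x - a2‖ / ‖y - a2‖))) :
    ∀ x ∈ interior P, ∀ y ∈ interior P, ∀ i : Fin m,
      d x y ≥ (1/2) * |Real.log (f i x / f i y)| := by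
  intro x hx y hy i
  rcases eq_or_ne x y with rfl | hxy
  · simp [hd0]
  have hfi : ∀ z ∈ P, 0 ≤ f i z := fun z hz => (hP ▸ hz) i
  obtain ⟨t₁, t₂, ht₁, ht₂, h₁, h₂⟩ := exists_lineMap_mem_frontier hPcomp.isBounded hx hy hxy
  have hfi_chord (t : ℝ) (ht : lineMap x y t ∈ frontier P) : 0 ≤ lineMap (f i x) (f i y) t := by
    rw [← AffineMap.apply_lineMap]
    exact hfi _ (frontier_subset_iff_isClosed.2 hPcomp.isClosed ht)
  have hchord (t : ℝ) : lineMap x y t = x + t • (y - x) := by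
    rw [lineMap_apply_module', add_comm]
  rw [hd x y hx hy hxy _ _ h₁ h₂ ⟨t₁, t₂, ht₁, ht₂, hchord t₁, hchord t₂⟩,
    cross_ratio_lineMap hxy ht₁ ht₂, ge_iff_le]
  exact mul_le_mul_of_nonneg_left (abs_log_div_le_log_cross_ratio
    (hfi x (interior_subset hx)) (hfi y (interior_subset hy)) ht₁ ht₂
    (hfi_chord t₁ h₁) (hfi_chord t₂ h₂)) (by norm_num)

/-- For a compact convex polytope `P = {x : fᵢ(x) ≥ 0}` with Hilbert metric `d`,
`d(x,y) ≥ (1/2) maxᵢ |log(fᵢ(x)/fᵢ(y))|` for all interior points `x, y`. -/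
theorem hilbert_dist_ge_log_ratio {n m : ℕ}
    (f : Fin m → (EuclideanSpace ℝ (Fin n) →ᵃ[ℝ] ℝ))
    (P : Set (EuclideanSpace ℝ (Fin n)))
    (hP : P = {x | ∀ i, 0 ≤ f i x})
    (hPcomp : IsCompact P) (hPint : (interior P).Nonempty)
    (d : EuclideanSpace ℝ (Fin n) → EuclideanSpace ℝ (Fin n) → ℝ)
    (hd0 : ∀ x, d x x = 0)
    (hd : ∀ x y, x ∈ interior P → y ∈ interior P → x ≠ y →
      ∀ a1 a2 : EuclideanSpace ℝ (Fin n), a1 ∈ frontier P → a2 ∈ frontier P →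
      (∃ t1 t2 : ℝ, t1 < 0 ∧ 1 < t2 ∧ a1 = x + t1 • (y - x) ∧ a2 = x + t2 • (y - x)) →
      d x y = (1/2) * Real.log ((‖y - a1‖ / ‖x - a1‖) * (‖x - a2‖ / ‖y - a2‖))) :
    ∀ x ∈ interior P, ∀ y ∈ interior P, ∀ i : Fin m,
      d x y ≥ (1/2) * |Real.log (f i x / f i y)| :=
  hilbert_dist_ge_log_ratio_general f P hP hPcomp d hd0 hd
end

section
/- Let Φ : int P → ℝⁿ be the map Φ(x) = Σ_i log(f_i(x)) ∇f_i for a compact polytope P. If there is a constant C > 0 such that ‖dΦ_x(v)‖₂ ≥ C ‖v‖_x for all x ∈ int P and all tangent vectors v (where ‖·‖_x is the Hilbert Finsler norm), and Φ is Lipschitz from (int P, d) to ℝⁿ, then Φ is surjective onto ℝⁿ and is a bilipschitz homeomorphism from (int P, d) onto (ℝⁿ, ‖·‖₂), with Φ⁻¹ having Lipschitz constant 1/C. -/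
/-!
`Φ` is minus the gradient of the concave entropy `H(x) = ∑ᵢ (fᵢ(x) - fᵢ(x) log fᵢ(x))`, whose
Hessian `-dΦ` is negative definite on `int P` because `P` is bounded. Hence `Φ` is strictly
monotone along segments, so injective; and for every `p` the maximiser of `⟪p, x⟫ + H(x)` over the
compact set `P` lies in the interior (the entropy has infinite slope at the boundary), where it
solves `Φ(x) = p`.

For the lower bound, if the chord through `x ≠ y` leaves `P` through the facets `k` and `l`, the
cross-ratio formula reads `d(x, y) = ρ(y) - ρ(x)` with `ρ = (log f_k - log f_l) / 2`. The
differential of `ρ` is bounded by the Finsler norm, hence by property (A) by `‖dΦ‖ / C`. Since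
`Φ⁻¹` is differentiable by the inverse function theorem, `ρ ∘ Φ⁻¹` is `1/C`-Lipschitz on `ℝⁿ`.
-/

open RealInnerProductSpace

open Real Set Filter Topology

section Ray

variable {F : Type*} [NormedAddCommGroup F] [NormedSpace ℝ F] {K : Set F} {x w : F}

theorem Bornology.IsBounded.exists_add_smul_notMem (hK : Bornology.IsBounded K) (x : F)
    (hw : w ≠ 0) : ∃ t : ℝ, 0 ≤ t ∧ x + t • w ∉ K := by
  obtain ⟨R, hR⟩ := hK.exists_norm_le
  have hw' : 0 < ‖w‖ := norm_pos_iff.mpr hw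
  set t := (|R| + ‖x‖ + 1) / ‖w‖
  refine ⟨t, by positivity, fun hmem => ?_⟩
  have htw : ‖t • w‖ = |R| + ‖x‖ + 1 := by
    rw [norm_smul, Real.norm_of_nonneg (by positivity), div_mul_cancel₀ _ hw'.ne']
  have := norm_sub_le (x + t • w) x
  rw [add_sub_cancel_left, htw] at this
  linarith [hR _ hmem, le_abs_self R]

theorem Bornology.IsBounded.exists_pos_add_smul_mem_frontier (hK : Bornology.IsBounded K)
    (hx : x ∈ interior K) (hw : w ≠ 0) : ∃ t : ℝ, 0 < t ∧ x + t • w ∈ frontier K := by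
  set ray : ℝ → F := fun t => x + t • w
  have hray : IsPreconnected (ray '' Ici 0) :=
    isPreconnected_Ici.image _ (by fun_prop : Continuous ray).continuousOn
  by_contra! hfr
  have hsub : ray '' Ici 0 ⊆ interior K := by
    refine hray.subset_left_of_subset_union isOpen_interior isClosed_closure.isOpen_compl
      (disjoint_compl_right.mono_left interior_subset_closure) ?_ ⟨x, ⟨0, by simp [ray]⟩, hx⟩
    rintro _ ⟨t, ht, rfl⟩
    by_contra! hout
    rw [mem_union, not_or, mem_compl_iff, not_not] at hout
    rcases (mem_Ici.mp ht).eq_or_lt with rfl | htpos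
    · simp [ray, hx] at hout
    · exact hfr t htpos ⟨hout.2, hout.1⟩
  obtain ⟨t, ht, hnot⟩ := hK.exists_add_smul_notMem x hw
  exact hnot (interior_subset (hsub ⟨t, ht, rfl⟩))

end Ray

noncomputable section

namespace PolytopeLogMap

variable {E : Type*} [NormedAddCommGroup E] [InnerProductSpace ℝ E] {ι : Type*}

section Polytope

variable (g : ι → E) (b : ι → ℝ)

def polytope : Set E := {x | ∀ i, 0 ≤ ⟪g i, x⟫ + b i}

def logRatio (k l : ι) (x : E) : ℝ := (log (⟪g k, x⟫ + b k) - log (⟪g l, x⟫ + b l)) / 2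

variable {g b}

theorem inner_add_smul_add (a x w : E) (c t : ℝ) :
    ⟪a, x + t • w⟫ + c = ⟪a, x⟫ + c + t * ⟪a, w⟫ := by
  rw [inner_add_right, real_inner_smul_right]; ring

theorem inner_smul_add_smul_add (a x y : E) (c s t : ℝ) (hst : s + t = 1) :
    ⟪a, s • x + t • y⟫ + c = s * (⟪a, x⟫ + c) + t * (⟪a, y⟫ + c) := by
  rw [inner_add_right, real_inner_smul_right, real_inner_smul_right]
  linear_combination c * hst.symm

theorem isClosed_polytope : IsClosed (polytope g b) := by
  simp only [polytope, ofPred_forall]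
  exact isClosed_iInter fun i => isClosed_le continuous_const (by fun_prop)

theorem convex_polytope : Convex ℝ (polytope g b) := by
  intro x hx y hy s t hs ht hst i
  rw [inner_smul_add_smul_add _ _ _ _ _ _ hst]
  have := hx i; have := hy i
  positivity

theorem mem_interior_polytope [Finite ι] {x : E} (hx : x ∈ polytope g b)
    (hpos : ∀ i, g i ≠ 0 → 0 < ⟪g i, x⟫ + b i) : x ∈ interior (polytope g b) := by
  have hev : ∀ i, ∀ᶠ z in 𝓝 x, 0 ≤ ⟪g i, z⟫ + b i := by
    intro i
    by_cases hgi : g i = 0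
    · exact Eventually.of_forall fun z => by simpa [hgi] using hx i
    · exact ((continuous_const.inner continuous_id).add continuous_const).continuousAt.eventually
        (lt_mem_nhds (hpos i hgi)) |>.mono fun _ => le_of_lt
  exact mem_interior_iff_mem_nhds.mpr (eventually_all.mpr hev)

theorem pos_of_mem_interior_polytope {x : E} (hx : x ∈ interior (polytope g b)) {i : ι}
    (hgi : g i ≠ 0) : 0 < ⟪g i, x⟫ + b i := by
  have hnhds : ∀ᶠ t : ℝ in 𝓝 0, x + t • g i ∈ polytope g b :=
    (by fun_prop : Continuous fun t : ℝ => x + t • g i).continuousAt.eventually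
      (by simpa using mem_interior_iff_mem_nhds.mp hx)
  obtain ⟨t, hmem, ht⟩ := (hnhds.filter_mono nhdsWithin_le_nhds |>.and self_mem_nhdsWithin).exists
    (f := 𝓝[<] (0 : ℝ))
  have := hmem i
  rw [inner_add_smul_add, real_inner_self_eq_norm_sq] at this
  have : 0 < ‖g i‖ ^ 2 := by positivity
  nlinarith [show t < 0 from ht]

theorem exists_active_of_mem_frontier [Finite ι] {a : E} (ha : a ∈ frontier (polytope g b)) :
    ∃ i, g i ≠ 0 ∧ ⟪g i, a⟫ + b i = 0 := by
  rw [isClosed_polytope.frontier_eq] at ha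
  by_contra! h
  exact ha.2 (mem_interior_polytope ha.1 fun i hgi => (ha.1 i).lt_of_ne' (h i hgi))

theorem eq_zero_of_forall_inner_eq_zero (hP : Bornology.IsBounded (polytope g b)) {x v : E}
    (hx : x ∈ polytope g b) (hv : ∀ i, ⟪g i, v⟫ = 0) : v = 0 := by
  by_contra hv0
  obtain ⟨t, -, ht⟩ := hP.exists_add_smul_notMem x hv0
  exact ht fun i => by simpa [inner_add_smul_add, hv i] using hx i

theorem norm_sub_div_norm_sub_eq {a' a x y w : E} {c s t : ℝ} (ha : ⟪a', a⟫ + c = 0)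
    (hx : x - a = s • w) (hy : y - a = t • w) (hfx : ⟪a', x⟫ + c ≠ 0) :
    ‖y - a‖ / ‖x - a‖ = |⟪a', y⟫ + c| / |⟪a', x⟫ + c| := by
  have hf : ∀ z, ⟪a', z⟫ + c = ⟪a', z - a⟫ := fun z => by rw [inner_sub_right]; linarith
  rw [hf x, hx, real_inner_smul_right] at hfx ⊢
  rw [hf y, hy, real_inner_smul_right, norm_smul, norm_smul, abs_mul, abs_mul, Real.norm_eq_abs,
    Real.norm_eq_abs]
  have hw : w ≠ 0 := by rintro rfl; simp at hfx
  rw [mul_div_mul_right _ _ (norm_ne_zero_iff.mpr hw),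
    mul_div_mul_right _ _ (abs_ne_zero.mpr (right_ne_zero_of_mul hfx))]

theorem exists_chord_endpoints (hP : Bornology.IsBounded (polytope g b)) {x y : E}
    (hx : x ∈ interior (polytope g b)) (hy : y ∈ interior (polytope g b)) (hxy : x ≠ y) :
    ∃ t₁ t₂ : ℝ, t₁ < 0 ∧ 1 < t₂ ∧ x + t₁ • (y - x) ∈ frontier (polytope g b) ∧
      x + t₂ • (y - x) ∈ frontier (polytope g b) := by
  have hw : y - x ≠ 0 := sub_ne_zero.mpr hxy.symm
  obtain ⟨s₁, hs₁, h₁⟩ := hP.exists_pos_add_smul_mem_frontier hx (neg_ne_zero.mpr hw)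
  obtain ⟨s₂, hs₂, h₂⟩ := hP.exists_pos_add_smul_mem_frontier hy hw
  refine ⟨-s₁, 1 + s₂, by linarith, by linarith, by rwa [neg_smul, ← smul_neg], ?_⟩
  convert h₂ using 1
  module

theorem half_log_cross_ratio_eq [Finite ι] {x y : E} (hx : x ∈ interior (polytope g b))
    (hy : y ∈ interior (polytope g b)) {t₁ t₂ : ℝ}
    (h₁ : x + t₁ • (y - x) ∈ frontier (polytope g b))
    (h₂ : x + t₂ • (y - x) ∈ frontier (polytope g b)) :
    ∃ k l, g k ≠ 0 ∧ g l ≠ 0 ∧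
      1 / 2 * log (‖y - (x + t₁ • (y - x))‖ / ‖x - (x + t₁ • (y - x))‖ *
        (‖x - (x + t₂ • (y - x))‖ / ‖y - (x + t₂ • (y - x))‖)) =
        logRatio g b k l y - logRatio g b k l x := by
  obtain ⟨k, hk, hk₀⟩ := exists_active_of_mem_frontier h₁
  obtain ⟨l, hl, hl₀⟩ := exists_active_of_mem_frontier h₂
  have hkx := pos_of_mem_interior_polytope hx hk
  have hky := pos_of_mem_interior_polytope hy hk
  have hlx := pos_of_mem_interior_polytope hx hl
  have hly := pos_of_mem_interior_polytope hy hl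
  refine ⟨k, l, hk, hl, ?_⟩
  rw [norm_sub_div_norm_sub_eq hk₀ (w := y - x) (s := -t₁) (by module) (t := 1 - t₁) (by module)
      hkx.ne',
    norm_sub_div_norm_sub_eq hl₀ (w := y - x) (s := 1 - t₂) (by module) (t := -t₂) (by module)
      hly.ne',
    abs_of_pos hkx, abs_of_pos hky, abs_of_pos hlx, abs_of_pos hly,
    log_mul (by positivity) (by positivity), log_div hky.ne' hkx.ne', log_div hlx.ne' hly.ne']
  unfold logRatio
  ring

theorem inner_div_le_inv_of_sub_smul_mem {z w : E} {T : ℝ} (hz : z ∈ polytope g b) (hT : 0 < T)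
    (hzT : z - T • w ∈ polytope g b) (i : ι) : ⟪g i, w⟫ / (⟪g i, z⟫ + b i) ≤ T⁻¹ := by
  rcases (hz i).eq_or_lt with h | h
  · rw [← h, div_zero]; positivity
  · have := hzT i
    rw [sub_eq_add_neg, ← neg_smul, inner_add_smul_add] at this
    rw [div_le_iff₀ h, le_inv_mul_iff₀' hT]
    linarith

theorem abs_inner_div_sub_le (hP : Bornology.IsBounded (polytope g b)) {z w : E}
    (hz : z ∈ interior (polytope g b)) (hw : w ≠ 0) {ν : ℝ}
    (hν : ∀ t₁ t₂ : ℝ, 0 < t₁ → 0 < t₂ → z + t₁ • w ∈ frontier (polytope g b) →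
      z - t₂ • w ∈ frontier (polytope g b) → ν = 1 / 2 * (1 / t₁ + 1 / t₂)) (k l : ι) :
    |⟪g k, w⟫ / (⟪g k, z⟫ + b k) - ⟪g l, w⟫ / (⟪g l, z⟫ + b l)| ≤ 2 * ν := by
  obtain ⟨t₁, ht₁, h₁⟩ := hP.exists_pos_add_smul_mem_frontier hz hw
  obtain ⟨t₂, ht₂, h₂⟩ := hP.exists_pos_add_smul_mem_frontier hz (neg_ne_zero.mpr hw)
  rw [smul_neg, ← sub_eq_add_neg] at h₂
  have hmem₁ : z - t₁ • -w ∈ polytope g b := by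
    simpa using isClosed_polytope.frontier_subset h₁
  have hmem₂ := isClosed_polytope.frontier_subset h₂
  have hslope : ∀ i, ⟪g i, w⟫ / (⟪g i, z⟫ + b i) ≤ t₂⁻¹ ∧
      -(⟪g i, w⟫ / (⟪g i, z⟫ + b i)) ≤ t₁⁻¹ := fun i =>
    ⟨inner_div_le_inv_of_sub_smul_mem (interior_subset hz) ht₂ hmem₂ i, by
      simpa [inner_neg_right, neg_div] using
        inner_div_le_inv_of_sub_smul_mem (interior_subset hz) ht₁ hmem₁ i⟩
  rw [hν t₁ t₂ ht₁ ht₂ h₁ h₂, abs_sub_le_iff]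
  constructor <;> linarith [hslope k, hslope l, one_div t₁, one_div t₂]

theorem hasFDerivAt_logRatio {k l : ι} (hk : g k ≠ 0) (hl : g l ≠ 0) {x : E}
    (hx : x ∈ interior (polytope g b)) :
    HasFDerivAt (logRatio g b k l) ((2 : ℝ)⁻¹ • ((⟪g k, x⟫ + b k)⁻¹ • innerSL ℝ (g k) -
      (⟪g l, x⟫ + b l)⁻¹ • innerSL ℝ (g l))) x := by
  have hlog : ∀ {i}, g i ≠ 0 → HasFDerivAt (fun y => log (⟪g i, y⟫ + b i))
      ((⟪g i, x⟫ + b i)⁻¹ • innerSL ℝ (g i)) x := fun hi =>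
    (((innerSL ℝ _).hasFDerivAt).add_const _).log (pos_of_mem_interior_polytope hx hi).ne'
  have hρ : logRatio g b k l =
      fun y => (2 : ℝ)⁻¹ • (log (⟪g k, y⟫ + b k) - log (⟪g l, y⟫ + b l)) := by
    funext y; simp [logRatio, div_eq_inv_mul]
  rw [hρ]
  exact ((hlog hk).sub (hlog hl)).const_smul (2 : ℝ)⁻¹

end Polytope

variable [Fintype ι] (g : ι → E) (b : ι → ℝ)

def logMap (x : E) : E := ∑ i, log (⟪g i, x⟫ + b i) • g i

def logMapDeriv (x : E) : E →L[ℝ] E :=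
  ∑ i, (⟪g i, x⟫ + b i)⁻¹ • (innerSL ℝ (g i)).smulRight (g i)

def entropy (x : E) : ℝ := ∑ i, (negMulLog (⟪g i, x⟫ + b i) + (⟪g i, x⟫ + b i))

variable {g b}

theorem logMapDeriv_apply (x v : E) :
    logMapDeriv g b x v = ∑ i, (⟪g i, v⟫ / (⟪g i, x⟫ + b i)) • g i := by
  simp [logMapDeriv, div_eq_inv_mul, mul_smul]

theorem inner_logMapDeriv_self (x v : E) :
    ⟪logMapDeriv g b x v, v⟫ = ∑ i, ⟪g i, v⟫ ^ 2 / (⟪g i, x⟫ + b i) := by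
  simp only [logMapDeriv_apply, sum_inner, real_inner_smul_left]
  exact Finset.sum_congr rfl fun i _ => by ring

theorem inner_logMapDeriv_self_pos (hP : Bornology.IsBounded (polytope g b)) {x v : E}
    (hx : x ∈ interior (polytope g b)) (hv : v ≠ 0) : 0 < ⟪logMapDeriv g b x v, v⟫ := by
  obtain ⟨i, hi⟩ : ∃ i, ⟪g i, v⟫ ≠ 0 := by
    by_contra! h
    exact hv (eq_zero_of_forall_inner_eq_zero hP (interior_subset hx) h)
  have hgi : g i ≠ 0 := by rintro h; simp [h] at hi
  rw [inner_logMapDeriv_self]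
  refine Finset.sum_pos' (fun j _ => div_nonneg (sq_nonneg _) (interior_subset hx j))
    ⟨i, Finset.mem_univ _, div_pos (by positivity) (pos_of_mem_interior_polytope hx hgi)⟩

theorem logMapDeriv_injective (hP : Bornology.IsBounded (polytope g b)) {x : E}
    (hx : x ∈ interior (polytope g b)) : Function.Injective (logMapDeriv g b x) := by
  rw [← ContinuousLinearMap.coe_coe, ← LinearMap.ker_eq_bot, LinearMap.ker_eq_bot']
  intro v hv
  by_contra hv0
  have := inner_logMapDeriv_self_pos hP hx hv0
  simp_all

theorem hasStrictFDerivAt_logMap {x : E} (hx : x ∈ interior (polytope g b)) :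
    HasStrictFDerivAt (logMap g b) (logMapDeriv g b x) x := by
  unfold logMap logMapDeriv
  refine HasStrictFDerivAt.fun_sum fun i _ => ?_
  by_cases hgi : g i = 0
  · simpa [hgi] using hasStrictFDerivAt_const (0 : E) x
  · have hlog := (((innerSL ℝ (g i)).hasStrictFDerivAt (x := x)).add_const (b i)).log
      (pos_of_mem_interior_polytope hx hgi).ne'
    convert hlog.smul_const (g i) using 1 <;> ext <;> simp [mul_smul]

theorem inner_logMap_sub_pos (hP : Bornology.IsBounded (polytope g b)) {x y : E}
    (hx : x ∈ interior (polytope g b)) (hy : y ∈ interior (polytope g b)) (hxy : x ≠ y) :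
    0 < ⟪logMap g b y - logMap g b x, y - x⟫ := by
  set v := y - x
  set z : ℝ → E := fun t => x + t • v
  have hz : ∀ t ∈ Icc (0 : ℝ) 1, z t ∈ interior (polytope g b) := fun t ht =>
    convex_polytope.interior.add_smul_sub_mem hx hy ht
  have hderiv : ∀ t ∈ Icc (0 : ℝ) 1, HasDerivAt (fun t => ⟪logMap g b (z t), v⟫)
      ⟪logMapDeriv g b (z t) v, v⟫ t := by
    intro t ht
    have hline : HasDerivAt z v t := by
      convert ((hasDerivAt_id t).smul_const v).const_add x using 1 <;> simp [z]
    simpa using ((hasStrictFDerivAt_logMap (hz t ht)).hasFDerivAt.comp_hasDerivAt t hline).inner ℝ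
      (hasDerivAt_const t v)
  obtain ⟨c, hc, hslope⟩ := exists_hasDerivAt_eq_slope _ _ zero_lt_one
    (fun t ht => (hderiv t ht).continuousAt.continuousWithinAt)
    (fun t ht => hderiv t (Ioo_subset_Icc_self ht))
  have hpos := inner_logMapDeriv_self_pos hP (hz c (Ioo_subset_Icc_self hc))
    (sub_ne_zero.mpr hxy.symm)
  rw [hslope] at hpos
  simpa [z, v, inner_sub_left] using hpos

theorem injOn_logMap (hP : Bornology.IsBounded (polytope g b)) :
    InjOn (logMap g b) (interior (polytope g b)) := by
  intro x hx y hy hxy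
  by_contra hne
  simpa [hxy] using inner_logMap_sub_pos hP hx hy hne

theorem hasFDerivAt_entropy {x : E} (hx : x ∈ interior (polytope g b)) :
    HasFDerivAt (entropy g b) (-innerSL ℝ (logMap g b x)) x := by
  have hsum : HasFDerivAt (entropy g b) (∑ i, (-log (⟪g i, x⟫ + b i)) • innerSL ℝ (g i)) x := by
    refine HasFDerivAt.fun_sum (A' := fun i => (-log (⟪g i, x⟫ + b i)) • innerSL ℝ (g i))
      fun i _ => ?_
    by_cases hgi : g i = 0
    · simpa [hgi] using hasFDerivAt_const (𝕜 := ℝ) (negMulLog (b i) + b i) x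
    · have hf : HasFDerivAt (fun y => ⟪g i, y⟫ + b i) (innerSL ℝ (g i)) x :=
        ((innerSL ℝ (g i)).hasFDerivAt).add_const (b i)
      refine (((hasDerivAt_negMulLog (pos_of_mem_interior_polytope hx hgi).ne').comp_hasFDerivAt
        x hf).add hf).congr_fderiv ?_
      ext v
      simp
      ring
  convert hsum using 1
  ext v
  simp [logMap]

theorem negMulLog_add_self_combo_ge {a c s t : ℝ} (ha : 0 ≤ a) (hc : 0 ≤ c) (hs : 0 ≤ s)
    (ht : 0 ≤ t) (hst : s + t = 1) :
    s * (negMulLog a + a) + t * (negMulLog c + c) ≤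
      negMulLog (s * a + t * c) + (s * a + t * c) := by
  have := concaveOn_negMulLog.2 (mem_Ici.mpr ha) (mem_Ici.mpr hc) hs ht hst
  simp only [smul_eq_mul] at this
  linarith

theorem mem_interior_of_isMaxOn {x₀ xb : E} (hx₀ : x₀ ∈ interior (polytope g b))
    (hxb : xb ∈ polytope g b) {p : E}
    (hmax : IsMaxOn (fun x => ⟪p, x⟫ + entropy g b x) (polytope g b) xb) :
    xb ∈ interior (polytope g b) := by
  classical
  by_contra hni
  obtain ⟨i₀, hgi₀, hact⟩ :=
    exists_active_of_mem_frontier (show xb ∈ frontier (polytope g b) from ⟨subset_closure hxb, hni⟩)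
  set ψ : ℝ → ℝ := fun s => negMulLog s + s
  set a : ι → ℝ := fun i => ⟪g i, xb⟫ + b i
  set c : ι → ℝ := fun i => ⟪g i, x₀⟫ + b i
  have hc₀ : 0 < c i₀ := pos_of_mem_interior_polytope hx₀ hgi₀
  set K := ⟪p, x₀ - xb⟫ + ∑ i, (ψ (c i) - ψ (a i))
  -- Concavity bounds the gain of moving from `xb` towards `x₀` below by `t K`, up to the active
  -- facet `i₀`, which adds `c i₀ * negMulLog t`: this dominates as `t → 0⁺`.
  have hbound : ∀ t ∈ Ioo (0 : ℝ) 1, t * (K - c i₀ * log t) ≤ 0 := by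
    rintro t ⟨ht0, ht1⟩
    have hle := isMaxOn_iff.mp hmax _ (convex_polytope hxb (interior_subset hx₀)
      (sub_nonneg.2 ht1.le) ht0.le (sub_add_cancel 1 t))
    have hp : ⟪p, (1 - t) • xb + t • x₀⟫ = ⟪p, xb⟫ + t * ⟪p, x₀ - xb⟫ := by
      simp only [inner_add_right, inner_sub_right, real_inner_smul_right]; ring
    simp only [entropy, hp, inner_smul_add_smul_add _ _ _ _ _ _ (sub_add_cancel 1 t)] at hle
    have hterm : ∀ i, t * (ψ (c i) - ψ (a i)) + (if i = i₀ then c i₀ * negMulLog t else 0)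
        ≤ ψ ((1 - t) * a i + t * c i) - ψ (a i) := by
      intro i
      split_ifs with h
      · subst h
        simp only [ψ, a, hact, mul_zero, zero_add, negMulLog_zero, negMulLog_mul]
        linarith
      · linarith [negMulLog_add_self_combo_ge (hxb i) (interior_subset hx₀ i)
          (sub_nonneg.2 ht1.le) ht0.le (sub_add_cancel 1 t)]
    have hsum := Finset.sum_le_sum fun i (_ : i ∈ Finset.univ) => hterm i
    rw [Finset.sum_add_distrib, ← Finset.mul_sum, Finset.sum_ite_eq', Finset.sum_sub_distrib]
      at hsum
    simp only [Finset.mem_univ, if_true] at hsum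
    simp only [Finset.sum_sub_distrib, ψ, a, c, K, negMulLog] at hsum hle ⊢
    linarith
  obtain ⟨t, hlog, ht⟩ := (((tendsto_log_nhdsGT_zero.const_mul_atBot hc₀).eventually
    (eventually_lt_atBot K)).and (Ioo_mem_nhdsGT one_pos)).exists
  nlinarith [hbound t ht, ht.1]

theorem exists_logMap_eq (hP : IsCompact (polytope g b))
    (hne : (interior (polytope g b)).Nonempty) (p : E) :
    ∃ x ∈ interior (polytope g b), logMap g b x = p := by
  obtain ⟨x₀, hx₀⟩ := hne
  have hcont : Continuous fun x => ⟪p, x⟫ + entropy g b x := by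
    unfold entropy; fun_prop
  obtain ⟨xb, hxb, hmax⟩ := hP.exists_isMaxOn ⟨x₀, interior_subset hx₀⟩ hcont.continuousOn
  have hint := mem_interior_of_isMaxOn hx₀ hxb hmax
  refine ⟨xb, hint, ?_⟩
  have hzero := (hmax.isLocalMax (mem_interior_iff_mem_nhds.mp hint)).hasFDerivAt_eq_zero
    (((innerSL ℝ p).hasFDerivAt).add (hasFDerivAt_entropy hint))
  have h := congrArg (fun L => L (p - logMap g b xb)) hzero
  simp only [add_apply, coe_innerSL_apply, neg_apply, zero_apply] at h
  rw [← sub_eq_add_neg, ← inner_sub_left, inner_self_eq_zero, sub_eq_zero] at h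
  exact h.symm

theorem exists_hasFDerivAt_inverse [FiniteDimensional ℝ E]
    (hP : Bornology.IsBounded (polytope g b)) {Ψ : E → E}
    (hΨ : ∀ r, Ψ r ∈ interior (polytope g b)) (hΦΨ : ∀ r, logMap g b (Ψ r) = r) (r : E) :
    ∃ Ψ' : E →L[ℝ] E, HasFDerivAt Ψ Ψ' r ∧ ∀ w, logMapDeriv g b (Ψ r) (Ψ' w) = w := by
  have := FiniteDimensional.complete ℝ E
  set e := (LinearEquiv.ofInjectiveEndo _ (logMapDeriv_injective hP (hΨ r))).toContinuousLinearEquiv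
  have he : HasStrictFDerivAt (logMap g b) (e : E →L[ℝ] E) (Ψ r) := by
    convert hasStrictFDerivAt_logMap (hΨ r)
    exact ContinuousLinearMap.ext fun _ => rfl
  have hΨΦ : ∀ᶠ z in 𝓝 (Ψ r), Ψ (logMap g b z) = z :=
    Filter.mem_of_superset (isOpen_interior.mem_nhds (hΨ r)) fun z hz =>
      injOn_logMap hP (hΨ _) hz (hΦΨ _)
  have hinv := he.to_local_left_inverse hΨΦ
  rw [hΦΨ] at hinv
  exact ⟨e.symm, hinv.hasFDerivAt, e.apply_symm_apply⟩

theorem mul_abs_logRatio_sub_le [FiniteDimensional ℝ E] (hP : IsCompact (polytope g b))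
    (hne : (interior (polytope g b)).Nonempty) (N : E → E → ℝ)
    (hN : ∀ x ∈ interior (polytope g b), ∀ w : E, w ≠ 0 →
      ∀ t₁ t₂ : ℝ, 0 < t₁ → 0 < t₂ →
        x + t₁ • w ∈ frontier (polytope g b) → x - t₂ • w ∈ frontier (polytope g b) →
        N x w = 1 / 2 * (1 / t₁ + 1 / t₂))
    {C : ℝ} (hC : 0 < C)
    (hA : ∀ x ∈ interior (polytope g b), ∀ v, C * N x v ≤ ‖logMapDeriv g b x v‖)
    {k l : ι} (hk : g k ≠ 0) (hl : g l ≠ 0) {x y : E}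
    (hx : x ∈ interior (polytope g b)) (hy : y ∈ interior (polytope g b)) :
    C * |logRatio g b k l y - logRatio g b k l x| ≤ ‖logMap g b x - logMap g b y‖ := by
  choose Ψ hΨ hΦΨ using exists_logMap_eq hP hne
  have hΨΦ : ∀ z ∈ interior (polytope g b), Ψ (logMap g b z) = z := fun z hz =>
    injOn_logMap hP.isBounded (hΨ _) hz (hΦΨ _)
  choose Ψ' hΨ' hΨ'inv using exists_hasFDerivAt_inverse hP.isBounded hΨ hΦΨ
  set ρ' : E → E →L[ℝ] ℝ := fun z => (2 : ℝ)⁻¹ • ((⟪g k, z⟫ + b k)⁻¹ • innerSL ℝ (g k) -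
    (⟪g l, z⟫ + b l)⁻¹ • innerSL ℝ (g l))
  have hderiv : ∀ r, HasFDerivAt (logRatio g b k l ∘ Ψ) ((ρ' (Ψ r)).comp (Ψ' r)) r := fun r =>
    (hasFDerivAt_logRatio hk hl (hΨ r)).comp r (hΨ' r)
  have hbound : ∀ r, ‖(ρ' (Ψ r)).comp (Ψ' r)‖ ≤ C⁻¹ := by
    intro r
    refine ContinuousLinearMap.opNorm_le_bound _ (inv_nonneg.mpr hC.le) fun w => ?_
    rcases eq_or_ne w 0 with rfl | hw
    · simp
    have hv : Ψ' r w ≠ 0 := fun h => hw (by simpa [h] using (hΨ'inv r w).symm)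
    have hslopes := abs_inner_div_sub_le hP.isBounded (hΨ r) hv (hN _ (hΨ r) _ hv) k l
    have hCN := hA _ (hΨ r) (Ψ' r w)
    rw [hΨ'inv, ← le_div_iff₀' hC] at hCN
    simp only [ρ', ContinuousLinearMap.comp_apply, smul_apply,
      sub_apply, innerSL_apply_apply, smul_eq_mul, Real.norm_eq_abs,
      inv_mul_eq_div, abs_div, abs_two]
    linarith
  have hlip := Convex.norm_image_sub_le_of_norm_hasFDerivWithin_le
    (fun r _ => (hderiv r).hasFDerivWithinAt) (fun r _ => hbound r) convex_univ
    (mem_univ (logMap g b x)) (mem_univ (logMap g b y))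
  simp only [Function.comp_apply, hΨΦ x hx, hΨΦ y hy, Real.norm_eq_abs] at hlip
  rw [norm_sub_rev]
  calc C * |logRatio g b k l y - logRatio g b k l x|
      ≤ C * (C⁻¹ * ‖logMap g b y - logMap g b x‖) := by gcongr
    _ = ‖logMap g b y - logMap g b x‖ := by field_simp

end PolytopeLogMap

end

open PolytopeLogMap

theorem property_A_implies_B_general {n m : ℕ}
    (g : Fin m → EuclideanSpace ℝ (Fin n)) (b : Fin m → ℝ)
    (P : Set (EuclideanSpace ℝ (Fin n)))
    (hP : P = {x | ∀ i, 0 ≤ ⟪g i, x⟫ + b i})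
    (hPcomp : IsCompact P) (hPint : (interior P).Nonempty)
    (d : EuclideanSpace ℝ (Fin n) → EuclideanSpace ℝ (Fin n) → ℝ)
    (hd0 : ∀ x, d x x = 0)
    (hd : ∀ x y, x ∈ interior P → y ∈ interior P → x ≠ y →
      ∀ a1 a2 : EuclideanSpace ℝ (Fin n), a1 ∈ frontier P → a2 ∈ frontier P →
      (∃ t1 t2 : ℝ, t1 < 0 ∧ 1 < t2 ∧ a1 = x + t1 • (y - x) ∧ a2 = x + t2 • (y - x)) →
      d x y = (1/2) * Real.log ((‖y - a1‖ / ‖x - a1‖) * (‖x - a2‖ / ‖y - a2‖)))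
    -- the Hilbert Finsler norm
    (N : EuclideanSpace ℝ (Fin n) → EuclideanSpace ℝ (Fin n) → ℝ)
    (hN : ∀ x ∈ interior P, ∀ w : EuclideanSpace ℝ (Fin n), w ≠ 0 →
      ∀ t1 t2 : ℝ, 0 < t1 → 0 < t2 →
        x + t1 • w ∈ frontier P → x - t2 • w ∈ frontier P →
        N x w = (1/2) * (1/t1 + 1/t2))
    (Φ : EuclideanSpace ℝ (Fin n) → EuclideanSpace ℝ (Fin n))
    (hΦ : ∀ x, Φ x = ∑ i, Real.log (⟪g i, x⟫ + b i) • g i)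
    -- property (A)
    (C : ℝ) (hC : 0 < C)
    (hA : ∀ x ∈ interior P, ∀ v : EuclideanSpace ℝ (Fin n),
      C * N x v ≤ ‖∑ i, ((⟪g i, v⟫ / (⟪g i, x⟫ + b i)) • g i)‖) :
    Φ '' interior P = Set.univ ∧ Set.InjOn Φ (interior P) ∧
      ∀ x ∈ interior P, ∀ y ∈ interior P, C * d x y ≤ ‖Φ x - Φ y‖ := by
  subst hP
  obtain rfl : Φ = logMap g b := funext hΦ
  have hA' : ∀ x ∈ interior (polytope g b), ∀ v, C * N x v ≤ ‖logMapDeriv g b x v‖ :=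
    fun x hx v => by rw [logMapDeriv_apply]; exact hA x hx v
  refine ⟨eq_univ_of_forall fun p => exists_logMap_eq hPcomp hPint p,
    injOn_logMap hPcomp.isBounded, fun x hx y hy => ?_⟩
  rcases eq_or_ne x y with rfl | hxy
  · simp [hd0]
  obtain ⟨t₁, t₂, ht₁, ht₂, h₁, h₂⟩ := exists_chord_endpoints hPcomp.isBounded hx hy hxy
  obtain ⟨k, l, hk, hl, hcross⟩ := half_log_cross_ratio_eq hx hy h₁ h₂
  rw [hd x y hx hy hxy _ _ h₁ h₂ ⟨t₁, t₂, ht₁, ht₂, rfl, rfl⟩, hcross]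
  exact (mul_le_mul_of_nonneg_left (le_abs_self _) hC.le).trans
    (mul_abs_logRatio_sub_le hPcomp hPint N hN hC hA' hk hl hx hy)

/-- Property (A) implies property (B): if `‖dΦₓ(v)‖ ≥ C‖v‖ₓ` (Hilbert Finsler norm) and `Φ`
is Lipschitz from `(int P, d)` to Euclidean space, then (using completeness of `(int P, d)`)
`Φ` is onto `ℝⁿ`, injective on `int P`, and bilipschitz, with `Φ⁻¹` Lipschitz constant `1/C`. -/
theorem property_A_implies_B {n m : ℕ}
    (g : Fin m → EuclideanSpace ℝ (Fin n)) (b : Fin m → ℝ)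
    (P : Set (EuclideanSpace ℝ (Fin n)))
    (hP : P = {x | ∀ i, 0 ≤ ⟪g i, x⟫ + b i})
    (hPcomp : IsCompact P) (hPint : (interior P).Nonempty)
    (d : EuclideanSpace ℝ (Fin n) → EuclideanSpace ℝ (Fin n) → ℝ)
    (hd0 : ∀ x, d x x = 0)
    (hd : ∀ x y, x ∈ interior P → y ∈ interior P → x ≠ y →
      ∀ a1 a2 : EuclideanSpace ℝ (Fin n), a1 ∈ frontier P → a2 ∈ frontier P →
      (∃ t1 t2 : ℝ, t1 < 0 ∧ 1 < t2 ∧ a1 = x + t1 • (y - x) ∧ a2 = x + t2 • (y - x)) →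
      d x y = (1/2) * Real.log ((‖y - a1‖ / ‖x - a1‖) * (‖x - a2‖ / ‖y - a2‖)))
    -- completeness of the metric space (int P, d)
    (hcomplete : ∀ u : ℕ → EuclideanSpace ℝ (Fin n), (∀ k, u k ∈ interior P) →
      (∀ ε > 0, ∃ N : ℕ, ∀ p ≥ N, ∀ q ≥ N, d (u p) (u q) < ε) →
      ∃ x ∈ interior P, ∀ ε > 0, ∃ N : ℕ, ∀ k ≥ N, d (u k) x < ε)
    -- the Hilbert Finsler norm
    (N : EuclideanSpace ℝ (Fin n) → EuclideanSpace ℝ (Fin n) → ℝ)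
    (hN0 : ∀ x, N x 0 = 0)
    (hN : ∀ x ∈ interior P, ∀ w : EuclideanSpace ℝ (Fin n), w ≠ 0 →
      ∀ t1 t2 : ℝ, 0 < t1 → 0 < t2 →
        x + t1 • w ∈ frontier P → x - t2 • w ∈ frontier P →
        N x w = (1/2) * (1/t1 + 1/t2))
    (Φ : EuclideanSpace ℝ (Fin n) → EuclideanSpace ℝ (Fin n))
    (hΦ : ∀ x, Φ x = ∑ i, Real.log (⟪g i, x⟫ + b i) • g i)
    -- Φ is Lipschitz from (int P, d) to ℝⁿ
    (L : ℝ) (hL : 0 < L)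
    (hLip : ∀ x ∈ interior P, ∀ y ∈ interior P, ‖Φ x - Φ y‖ ≤ L * d x y)
    -- property (A)
    (C : ℝ) (hC : 0 < C)
    (hA : ∀ x ∈ interior P, ∀ v : EuclideanSpace ℝ (Fin n),
      C * N x v ≤ ‖∑ i, ((⟪g i, v⟫ / (⟪g i, x⟫ + b i)) • g i)‖) :
    Φ '' interior P = Set.univ ∧ Set.InjOn Φ (interior P) ∧
      ∀ x ∈ interior P, ∀ y ∈ interior P, C * d x y ≤ ‖Φ x - Φ y‖ :=
  property_A_implies_B_general g b P hP hPcomp hPint d hd0 hd N hN Φ hΦ C hC hA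
end
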